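/- arXiv:math/9406217 — 2 statements merged into one kernel-verified Lean document; each statement's English description precedes it below -/
import Mathlib

section
/- Let K be a metric space, f : K → ℂ a bounded function, n a positive integer, and x ∈ K. Then osc_n f(x) = sup{ Σ_{i=1}^k ε_i : 1 ≤ k ≤ n, ε_i > 0 for all 1 ≤ i ≤ k, and x ∈ os_k(f,(ε_i)) }, where the supremum of the empty set is taken to be 0. -/
open Filter Set Topology ENNReal

noncomputable section

universe u v

/-- The `ℓ¹`-type bound `sup_k Σ_j |φ_j(k)|` of a sequence of functions, in `ℝ≥0∞`. -/
def DBound {K : Type u} [MetricSpace K] (φ : ℕ → K → ℂ) : ℝ≥0∞ :=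
  ⨆ k : K, ∑' j : ℕ, (‖φ j k‖₊ : ℝ≥0∞)

/-- `φ` is a sequence of continuous functions summing pointwise to `f`. -/
def IsDRep {K : Type u} [MetricSpace K] (f : K → ℂ) (φ : ℕ → K → ℂ) : Prop :=
  (∀ j, Continuous (φ j)) ∧ ∀ k, HasSum (fun j => φ j k) (f k)

/-- `f` belongs to `D(K)`: it has a representing sequence with finite bound. -/
def MemD {K : Type u} [MetricSpace K] (f : K → ℂ) : Prop :=
  ∃ φ : ℕ → K → ℂ, IsDRep f φ ∧ DBound φ < ⊤

/-- The `D`-norm of `f`, equal to `⊤` when `f ∉ D(K)`. -/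
def DNorm {K : Type u} [MetricSpace K] (f : K → ℂ) : ℝ≥0∞ :=
  ⨅ (φ : ℕ → K → ℂ) (_ : IsDRep f φ), DBound φ

/-- The quotient `D`-seminorm: distance in `D`-norm to the bounded continuous functions. -/
def qDNorm {K : Type u} [MetricSpace K] (f : K → ℂ) : ℝ≥0∞ :=
  ⨅ (φ : K → ℂ) (_ : Continuous φ ∧ ∃ C : ℝ, ∀ k, ‖φ k‖ ≤ C), DNorm (f - φ)

/-- Upper semicontinuous envelope of `g`, computed relative to the subspace `L`. -/
def uscEnvWithin {K : Type u} [MetricSpace K] (L : Set K) (g : K → ℝ≥0∞) (x : K) : ℝ≥0∞ :=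
  ⨅ U ∈ 𝓝 x, ⨆ y ∈ U ∩ L, g y

/-- `limsup_{y→x, y ∈ L} (|f(y) - f(x)| + g(y))` (non-exclusive limsup, relative to `L`). -/
def toscSuccWithin {K : Type u} [MetricSpace K] (f : K → ℂ) (L : Set K)
    (g : K → ℝ≥0∞) (x : K) : ℝ≥0∞ :=
  ⨅ U ∈ 𝓝 x, ⨆ y ∈ U ∩ L, ((‖f y - f x‖₊ : ℝ≥0∞) + g y)

/-- The finite oscillations `osc_n (f|_L)` of `f` restricted to `L`. -/
def oscNWithin {K : Type u} [MetricSpace K] (f : K → ℂ) (L : Set K) : ℕ → K → ℝ≥0∞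
  | 0 => fun _ => 0
  | n + 1 => uscEnvWithin L (toscSuccWithin f L (oscNWithin f L n))

/-- The oscillation `osc (f|_L)` of `f` restricted to `L`. -/
def oscWithin {K : Type u} [MetricSpace K] (f : K → ℂ) (L : Set K) : K → ℝ≥0∞ :=
  oscNWithin f L 1

/-- The finite oscillations `osc_n f`. -/
def oscN {K : Type u} [MetricSpace K] (f : K → ℂ) (n : ℕ) : K → ℝ≥0∞ :=
  oscNWithin f Set.univ n

/-- `osc_ω (f|_L)`: the usc envelope (relative to `L`) of `sup_n osc_n (f|_L)`. -/
def oscOmegaWithin {K : Type u} [MetricSpace K] (f : K → ℂ) (L : Set K) : K → ℝ≥0∞ :=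
  uscEnvWithin L (fun x => ⨆ n : ℕ, oscNWithin f L n x)

/-- `osc_ω f`. -/
def oscOmega {K : Type u} [MetricSpace K] (f : K → ℂ) : K → ℝ≥0∞ :=
  oscOmegaWithin f Set.univ

/-- `osc_{ω+1} (f|_L)`. -/
def oscOmegaSuccWithin {K : Type u} [MetricSpace K] (f : K → ℂ) (L : Set K) : K → ℝ≥0∞ :=
  uscEnvWithin L (toscSuccWithin f L (oscOmegaWithin f L))

/-- The oscillation sets `os_n(f, (ε_i))` (here `ε : ℕ → ℝ` is 0-indexed, so `ε 0 = ε_1`). -/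
def osSets {K : Type u} [MetricSpace K] (f : K → ℂ) (ε : ℕ → ℝ) : ℕ → Set K
  | 0 => Set.univ
  | n + 1 => {x ∈ osSets f ε n | ENNReal.ofReal (ε n) ≤ oscWithin f (osSets f ε n) x}

/-- The `ε`-Baire index `i_B(f, ε) = sup {n : os_n(f,ε) ≠ ∅} ∈ ℕ∞`. -/
def baireIndexE {K : Type u} [MetricSpace K] (f : K → ℂ) (ε : ℝ) : ℕ∞ :=
  ⨆ (n : ℕ) (_ : (osSets f (fun _ => ε) n).Nonempty), (n : ℕ∞)

/-- The Baire index `i_B(f) = sup_{ε > 0} i_B(f,ε)`. -/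
def baireIndexTotal {K : Type u} [MetricSpace K] (f : K → ℂ) : ℕ∞ :=
  ⨆ (ε : ℝ) (_ : 0 < ε), baireIndexE f ε

/-- The sets `os_n(f, ω, ε)` defined using `osc_ω` of successive restrictions. -/
def osOmegaSets {K : Type u} [MetricSpace K] (f : K → ℂ) (ε : ℝ≥0∞) : ℕ → Set K
  | 0 => Set.univ
  | n + 1 => {x ∈ osOmegaSets f ε n | ε ≤ oscOmegaWithin f (osOmegaSets f ε n) x}

/-- The index `i(f, ω, ε)`, valued in `ℝ≥0∞`. -/
def iOmega {K : Type u} [MetricSpace K] (f : K → ℂ) (ε : ℝ≥0∞) : ℝ≥0∞ :=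
  ⨆ (n : ℕ) (_ : (osOmegaSets f ε n).Nonempty), (n : ℝ≥0∞)

/-- The transfinite oscillations `osc_β f`. -/
def oscOrd {K : Type u} [MetricSpace K] (f : K → ℂ) (β : Ordinal.{v}) : K → ℝ≥0∞ :=
  Ordinal.limitRecOn β (fun _ => 0)
    (fun _ ih => uscEnvWithin Set.univ (toscSuccWithin f Set.univ ih))
    (fun γ _ ih => uscEnvWithin Set.univ (fun x => ⨆ (α : Ordinal) (h : α < γ), ih α h x))

/-- The weight of a topological space: least cardinality of a basis. -/
def tweight (K : Type u) [TopologicalSpace K] : Cardinal.{u} :=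
  ⨅ (B : Set (Set K)) (_ : TopologicalSpace.IsTopologicalBasis B), Cardinal.mk B

/-- `f` belongs to `B_{1/4}(K)`. -/
def MemB14 {K : Type u} [MetricSpace K] (f : K → ℂ) : Prop :=
  ∃ (g : ℕ → K → ℂ) (lam : ℝ≥0∞), lam < ⊤ ∧
    (∀ n, MemD (g n) ∧ DNorm (g n) ≤ lam) ∧ TendstoUniformly g f atTop

/-- The `B_{1/4}`-norm of `f`. -/
def B14Norm {K : Type u} [MetricSpace K] (f : K → ℂ) : ℝ≥0∞ :=
  ⨅ (lam : ℝ≥0∞) (_ : ∃ g : ℕ → K → ℂ,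
    (∀ n, MemD (g n) ∧ DNorm (g n) ≤ lam) ∧ TendstoUniformly g f atTop), lam

/-- `f` belongs to `SD(K)`: the closure in `D`-norm of the simple `D`-functions. -/
def MemSD {K : Type u} [MetricSpace K] (f : K → ℂ) : Prop :=
  MemD f ∧ ∀ ε : ℝ≥0∞, 0 < ε →
    ∃ φ : K → ℂ, (Set.range φ).Finite ∧ MemD φ ∧ DNorm (f - φ) < ε

/-- The algebra of sets generated by the open subsets of `K`. -/
inductive DAlg (K : Type u) [TopologicalSpace K] : Set K → Prop
  | basic (U : Set K) : IsOpen U → DAlg K U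
  | compl (A : Set K) : DAlg K A → DAlg K Aᶜ
  | union (A B : Set K) : DAlg K A → DAlg K B → DAlg K (A ∪ B)

/-- `W` is a difference of two closed sets. -/
def IsDCS {K : Type u} [TopologicalSpace K] (W : Set K) : Prop :=
  ∃ A B : Set K, IsClosed A ∧ IsClosed B ∧ W = A \ B

/-- The boundary of `A ∩ L` relative to the subspace `L`. -/
def relBoundary {K : Type u} [TopologicalSpace K] (L A : Set K) : Set K :=
  L ∩ closure (A ∩ L) ∩ closure (L \ A)

/-- The iterated boundaries `∂^n A` (with `∂^0 A = K`). -/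
def iterBoundary {K : Type u} [TopologicalSpace K] (A : Set K) : ℕ → Set K
  | 0 => Set.univ
  | n + 1 => relBoundary (iterBoundary A n) A

/-- The Baire index `i(A)` of a set: the largest `n` with `∂^n A ≠ ∅`. -/
def setIndex {K : Type u} [TopologicalSpace K] (A : Set K) : ℕ∞ :=
  ⨆ (n : ℕ) (_ : (iterBoundary A n).Nonempty), (n : ℕ∞)

/-- The iterated derived sets `K^{(n)}` of the space `K`. -/
def derivedIter (K : Type u) [TopologicalSpace K] : ℕ → Set K
  | 0 => Set.univ
  | n + 1 => {x | AccPt x (Filter.principal (derivedIter K n))}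

end

/-!
Let `Φₙ(x)` be the supremum of `∑ εᵢ` over `n` nonnegative heights with `x ∈ osₙ(f, ε)`; dropping
zero heights identifies it with the right-hand side. Along the chain `os₀ ⊇ os₁ ⊇ ⋯` each height is
at most the oscillation of `f` on the previous set, and these oscillations add up to at most
`oscₙ f`; hence the right-hand side is at most `oscₙ f`.

Conversely `oscₙ f ≤ Φₙ` by induction on `n`, from two facts: `Φₙ` is upper semicontinuous, and
`limsup_{y→x} (|f y - f x| + Φₙ y) ≤ Φₙ₊₁ x`. Both are pigeonhole arguments: capping the heights at
the target value and rounding them down to a grid of mesh `δ` leaves finitely many patterns, so a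
single pattern `ε` serves frequently many `y` near `x`. The set `osₙ(f, ε)` is closed, so it
contains `x`, and the increments `|f y - f x|` along these `y` bound from below the oscillation at
`x` of `f` restricted to `osₙ(f, ε)`, which is the extra height.
-/

open Filter Set Topology ENNReal NNReal Finset

theorem min_sum_le_sum_min {ι α : Type*} [AddCommMonoid α] [LinearOrder α] [IsOrderedAddMonoid α]
    [CanonicallyOrderedAdd α] (s : Finset ι) (a : ι → α) (c : α) :
    min (∑ i ∈ s, a i) c ≤ ∑ i ∈ s, min (a i) c := by
  by_cases h : ∃ i ∈ s, c ≤ a i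
  · obtain ⟨i, hi, hc⟩ := h
    calc min (∑ i ∈ s, a i) c ≤ min (a i) c := by rw [min_eq_right hc]; exact min_le_right _ _
      _ ≤ ∑ i ∈ s, min (a i) c := single_le_sum (f := fun j => min (a j) c) (fun _ _ => zero_le) hi
  · push Not at h
    rw [sum_congr rfl fun i hi => min_eq_left (h i hi).le]
    exact min_le_left _ _

section

variable {K : Type*} [MetricSpace K]

section Oscillation

theorem uscEnvWithin_eq_limsup (L : Set K) (g : K → ℝ≥0∞) (x : K) :
    uscEnvWithin L g x = limsup g (𝓝[L] x) :=
  ((nhdsWithin_hasBasis (𝓝 x).basis_sets L).limsup_eq_iInf_iSup).symm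

theorem upperSemicontinuous_uscEnvWithin (L : Set K) (g : K → ℝ≥0∞) :
    UpperSemicontinuous (uscEnvWithin L g) := by
  intro x c hc
  obtain ⟨U, hU, hUc⟩ : ∃ U ∈ 𝓝 x, ⨆ y ∈ U ∩ L, g y < c := by
    simpa [uscEnvWithin, iInf_lt_iff] using hc
  filter_upwards [eventually_mem_nhds_iff.mpr hU] with x' hx'
  exact (iInf₂_le U hx').trans_lt hUc

theorem apply_le_limsup_nhdsWithin {L : Set K} {x : K} (hx : x ∈ L) (u : K → ℝ≥0∞) :
    u x ≤ limsup u (𝓝[L] x) :=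
  le_limsup_of_frequently_le <|
    (frequently_pure (p := fun y => u x ≤ u y)).mpr le_rfl |>.filter_mono (pure_le_nhdsWithin hx)

variable (f : K → ℂ)

theorem toscSuccWithin_eq_limsup (L : Set K) (g : K → ℝ≥0∞) (x : K) :
    toscSuccWithin f L g x = limsup (fun y => (‖f y - f x‖₊ : ℝ≥0∞) + g y) (𝓝[L] x) :=
  uscEnvWithin_eq_limsup L _ x

theorem oscNWithin_succ_apply (L : Set K) (n : ℕ) (x : K) :
    oscNWithin f L (n + 1) x = limsup (fun y =>
      limsup (fun z => (‖f z - f y‖₊ : ℝ≥0∞) + oscNWithin f L n z) (𝓝[L] y)) (𝓝[L] x) := by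
  rw [oscNWithin, uscEnvWithin_eq_limsup]
  exact congrArg (limsup · _) (funext fun y => toscSuccWithin_eq_limsup f L _ y)

theorem oscWithin_apply (L : Set K) (x : K) :
    oscWithin f L x =
      limsup (fun y => limsup (fun z => (‖f z - f y‖₊ : ℝ≥0∞)) (𝓝[L] y)) (𝓝[L] x) := by
  rw [oscWithin, oscNWithin_succ_apply]
  simp only [oscNWithin, add_zero]

theorem oscN_succ_apply (n : ℕ) (x : K) :
    oscN f (n + 1) x = limsup (fun y =>
      limsup (fun z => (‖f z - f y‖₊ : ℝ≥0∞) + oscN f n z) (𝓝 y)) (𝓝 x) := by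
  simp only [oscN, oscNWithin_succ_apply, nhdsWithin_univ]

theorem oscN_mono : Monotone (oscN f) := by
  refine monotone_nat_of_le_succ fun n => ?_
  induction n with
  | zero => exact fun _ => zero_le
  | succ n ih =>
    intro x
    rw [oscN_succ_apply, oscN_succ_apply]
    exact limsup_le_limsup <| .of_forall fun y =>
      limsup_le_limsup <| .of_forall fun z => add_le_add_right (ih z) _

theorem oscWithin_mono {L L' : Set K} (h : L ⊆ L') (x : K) :
    oscWithin f L x ≤ oscWithin f L' x := by
  rw [oscWithin_apply, oscWithin_apply]
  exact (limsup_le_limsup <| .of_forall fun y => limsup_le_limsup_of_le (nhdsWithin_mono y h)).trans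
    (limsup_le_limsup_of_le (nhdsWithin_mono x h))

theorem le_oscWithin_of_frequently {L : Set K} {x : K} (hx : x ∈ L) {c : ℝ≥0∞}
    (h : ∃ᶠ y in 𝓝[L] x, c ≤ ‖f y - f x‖₊) : c ≤ oscWithin f L x := by
  rw [oscWithin_apply]
  exact (le_limsup_of_frequently_le h).trans (apply_le_limsup_nhdsWithin hx _)

theorem const_add_limsup_nhdsWithin {L : Set K} {x : K} (hx : x ∈ L) (c : ℝ≥0∞) (u : K → ℝ≥0∞) :
    c + limsup u (𝓝[L] x) = limsup (fun y => c + u y) (𝓝[L] x) :=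
  haveI := mem_closure_iff_nhdsWithin_neBot.mp (subset_closure hx)
  (limsup_const_add _ u c (by isBoundedDefault) (by isBoundedDefault)).symm

theorem add_oscWithin_le_oscN_succ {L : Set K} {x : K} (hx : x ∈ L) {c : ℝ≥0∞} {k : ℕ}
    (hc : ∀ z ∈ L, c ≤ oscN f k z) : c + oscWithin f L x ≤ oscN f (k + 1) x := by
  rw [oscWithin_apply, oscN_succ_apply, const_add_limsup_nhdsWithin hx]
  refine (limsup_le_limsup (eventually_nhdsWithin_of_forall fun y hy => ?_)).trans
    (limsup_le_limsup_of_le nhdsWithin_le_nhds)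
  rw [const_add_limsup_nhdsWithin hy]
  refine (limsup_le_limsup (eventually_nhdsWithin_of_forall fun z hz => ?_)).trans
    (limsup_le_limsup_of_le nhdsWithin_le_nhds)
  rw [add_comm]
  exact add_le_add_right (hc z hz) _

end Oscillation

section OscillationSets

variable (f : K → ℂ)

theorem isClosed_osSets (ε : ℕ → ℝ) : ∀ k, IsClosed (osSets f ε k)
  | 0 => isClosed_univ
  | k + 1 =>
    (isClosed_osSets ε k).inter ((upperSemicontinuous_uscEnvWithin _ _).isClosed_preimage _)

theorem mem_osSets_zero (x : K) : ∀ k, x ∈ osSets f (fun _ => 0) k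
  | 0 => mem_univ x
  | k + 1 => ⟨mem_osSets_zero x k, by simp⟩

theorem osSets_congr {ε ε' : ℕ → ℝ} {k : ℕ} (h : ∀ i < k, ε i = ε' i) :
    osSets f ε k = osSets f ε' k := by
  induction k with
  | zero => rfl
  | succ k ih =>
    rw [osSets, osSets, ih fun i hi => h i (hi.trans k.lt_succ_self), h k k.lt_succ_self]

theorem osSets_anti {ε ε' : ℕ → ℝ} {k : ℕ} (h : ∀ i < k, ε' i ≤ ε i) :
    osSets f ε k ⊆ osSets f ε' k := by
  induction k with
  | zero => exact subset_rfl
  | succ k ih =>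
    have hsub := ih fun i hi => h i (hi.trans k.lt_succ_self)
    rintro x ⟨hx, hosc⟩
    exact ⟨hsub hx, (ofReal_le_ofReal (h k k.lt_succ_self)).trans
      (hosc.trans (oscWithin_mono f hsub x))⟩

theorem sum_ofReal_le_oscN {ε : ℕ → ℝ} {k : ℕ} {x : K} (hx : x ∈ osSets f ε k) :
    ∑ i ∈ range k, ENNReal.ofReal (ε i) ≤ oscN f k x := by
  induction k generalizing x with
  | zero => simp
  | succ k ih =>
    obtain ⟨hxk, hosc⟩ := hx
    rw [sum_range_succ]
    exact (add_le_add_right hosc _).trans (add_oscWithin_le_oscN_succ f hxk fun z hz => ih hz)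

theorem exists_pos_sum_eq_osSets_subset (ε : ℕ → ℝ≥0) (k : ℕ) :
    ∃ k' ≤ k, ∃ ε' : ℕ → ℝ, (∀ i < k', 0 < ε' i) ∧
      ∑ i ∈ range k, (ε i : ℝ) = ∑ i ∈ range k', ε' i ∧
      osSets f (fun i => ε i) k ⊆ osSets f ε' k' := by
  induction k with
  | zero => exact ⟨0, le_rfl, 0, by simp, by simp, subset_rfl⟩
  | succ k ih =>
    obtain ⟨k', hk', ε', hpos, hsum, hsub⟩ := ih
    rcases eq_zero_or_pos (ε k) with hε | hε
    · refine ⟨k', hk'.trans k.le_succ, ε', hpos, by simp [sum_range_succ, hε, hsum],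
        fun x hx => hsub hx.1⟩
    · have hcongr : osSets f (Function.update ε' k' (ε k)) k' = osSets f ε' k' :=
        osSets_congr f fun i hi => Function.update_of_ne hi.ne _ _
      refine ⟨k' + 1, Nat.succ_le_succ hk', Function.update ε' k' (ε k), fun i hi => ?_, ?_, ?_⟩
      · rcases (Nat.lt_succ_iff.mp hi).lt_or_eq with hi | rfl
        · rw [Function.update_of_ne hi.ne]; exact hpos i hi
        · rw [Function.update_self]; exact hε
      · rw [sum_range_succ, sum_range_succ, Function.update_self, hsum]
        congr 1
        exact sum_congr rfl fun i hi => (Function.update_of_ne (mem_range.mp hi).ne _ _).symm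
      · rintro x ⟨hx, hosc⟩
        refine ⟨hcongr ▸ hsub hx, ?_⟩
        rw [hcongr, Function.update_self]
        exact hosc.trans (oscWithin_mono f hsub x)

end OscillationSets

section Discretization

variable (f : K → ℂ)

/-- The right-hand side of the theorem with exactly `n` heights, zero heights allowed, so that a
pattern can always be extended by one more height. -/
noncomputable def osSup (n : ℕ) (x : K) : ℝ≥0∞ :=
  ⨆ (ε : ℕ → ℝ≥0) (_ : x ∈ osSets f (fun i => ε i) n), ((∑ i ∈ range n, ε i : ℝ≥0) : ℝ≥0∞)

theorem le_osSup {n : ℕ} {x : K} {ε : ℕ → ℝ≥0} (hx : x ∈ osSets f (fun i => ε i) n) :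
    ((∑ i ∈ range n, ε i : ℝ≥0) : ℝ≥0∞) ≤ osSup f n x :=
  le_iSup₂ (f := fun ε (_ : x ∈ osSets f (fun i => ε i) n) => ((∑ i ∈ range n, ε i : ℝ≥0) : ℝ≥0∞))
    ε hx

def gridSeq {n N : ℕ} (η : ℝ≥0) (d : Fin n → Fin (N + 1)) (i : ℕ) : ℝ≥0 :=
  if h : i < n then η * (d ⟨i, h⟩ : ℕ) else 0

theorem exists_gridSeq {n : ℕ} (ε : ℕ → ℝ≥0) (s : ℝ≥0) {η : ℝ≥0} (hη : 0 < η) :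
    ∃ d : Fin n → Fin (⌊s / η⌋₊ + 1), (∀ i < n, gridSeq η d i ≤ ε i) ∧
      min (∑ i ∈ range n, ε i) s ≤ ∑ i ∈ range n, gridSeq η d i + n * η := by
  set m : ℕ → ℝ≥0 := fun i => min (ε i) s
  let d : Fin n → Fin (⌊s / η⌋₊ + 1) := fun i =>
    ⟨⌊m i / η⌋₊, Nat.lt_succ_of_le (Nat.floor_le_floor (by gcongr; exact min_le_right _ _))⟩
  have hd : ∀ i < n, gridSeq η d i = η * ⌊m i / η⌋₊ := fun i hi => by simp [gridSeq, hi, d]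
  refine ⟨d, fun i hi => ?_, ?_⟩
  · calc gridSeq η d i = η * ⌊m i / η⌋₊ := hd i hi
      _ ≤ η * (m i / η) := by gcongr; exact Nat.floor_le zero_le
      _ = m i := mul_div_cancel₀ _ hη.ne'
      _ ≤ ε i := min_le_left _ _
  · calc min (∑ i ∈ range n, ε i) s ≤ ∑ i ∈ range n, m i := min_sum_le_sum_min _ _ _
      _ ≤ ∑ i ∈ range n, (gridSeq η d i + η) := sum_le_sum fun i hi => ?_
      _ = ∑ i ∈ range n, gridSeq η d i + n * η := by
        rw [sum_add_distrib, sum_const, card_range, nsmul_eq_mul]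
    calc m i = η * (m i / η) := (mul_div_cancel₀ _ hη.ne').symm
      _ ≤ η * (⌊m i / η⌋₊ + 1) := by gcongr; exact (Nat.lt_floor_add_one _).le
      _ = gridSeq η d i + η := by rw [hd i (mem_range.mp hi), mul_add_one]

theorem exists_frequently_mem_osSets {l : Filter K} {n : ℕ} {g : K → ℝ≥0∞} {s δ : ℝ≥0}
    (hδ : 0 < δ) (h : ∃ᶠ y in l, (s : ℝ≥0∞) < osSup f n y + g y) :
    ∃ ε : ℕ → ℝ≥0, ∃ᶠ y in l, y ∈ osSets f (fun i => ε i) n ∧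
      (s : ℝ≥0∞) ≤ ((∑ i ∈ range n, ε i + δ : ℝ≥0) : ℝ≥0∞) + g y := by
  set η := δ / (n + 1)
  have hη : 0 < η := by positivity
  have hnη : n * η ≤ δ := by
    rw [mul_div_assoc', div_le_iff₀ (by positivity)]
    exact mul_le_mul_of_nonneg_right (by simp) zero_le |>.trans_eq (mul_comm _ _)
  have key : ∀ y, (s : ℝ≥0∞) < osSup f n y + g y → ∃ d : Fin n → Fin (⌊s / η⌋₊ + 1),
      y ∈ osSets f (fun i => gridSeq η d i) n ∧
      (s : ℝ≥0∞) ≤ ((∑ i ∈ range n, gridSeq η d i + δ : ℝ≥0) : ℝ≥0∞) + g y := by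
    intro y hy
    obtain ⟨ε, hyε, hs⟩ : ∃ ε : ℕ → ℝ≥0, y ∈ osSets f (fun i => ε i) n ∧
        (s : ℝ≥0∞) < ((∑ i ∈ range n, ε i : ℝ≥0) : ℝ≥0∞) + g y := by
      have hne : ∃ ε : ℕ → ℝ≥0, y ∈ osSets f (fun i => ε i) n :=
        ⟨0, by simpa using mem_osSets_zero f y n⟩
      rw [osSup, ENNReal.biSup_add' hne] at hy
      simpa only [lt_iSup_iff, exists_prop] using hy
    obtain ⟨d, hdε, hsum⟩ := exists_gridSeq (n := n) ε s hη
    refine ⟨d, osSets_anti f (fun i hi => NNReal.coe_le_coe.mpr (hdε i hi)) hyε, ?_⟩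
    calc (s : ℝ≥0∞) ≤ ((min (∑ i ∈ range n, ε i) s : ℝ≥0) : ℝ≥0∞) + g y := by
          rcases le_total (∑ i ∈ range n, ε i) s with hle | hle
          · rw [min_eq_left hle]; exact hs.le
          · rw [min_eq_right hle]; exact le_self_add
      _ ≤ _ := by gcongr; exact hsum.trans (by gcongr)
  -- the grid patterns form a finite type, so one of them occurs frequently
  obtain ⟨d, hd⟩ := frequently_exists.mp (h.mono key)
  exact ⟨gridSeq η d, hd⟩

end Discretization

section UpperBound

variable (f : K → ℂ)

theorem limsup_osSup_le (n : ℕ) (x : K) : limsup (osSup f n) (𝓝 x) ≤ osSup f n x := by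
  refine le_of_forall_nnreal_lt fun s hs => le_of_forall_pos_le_add fun δ hδ _ => ?_
  have hfreq : ∃ᶠ y in 𝓝 x, (s : ℝ≥0∞) < osSup f n y + 0 := by
    simpa only [add_zero] using frequently_lt_of_lt_limsup (by isBoundedDefault) hs
  obtain ⟨ε, hε⟩ := exists_frequently_mem_osSets f hδ hfreq
  have hx : x ∈ osSets f (fun i => ε i) n :=
    (isClosed_osSets f _ n).mem_of_frequently_of_tendsto (hε.mono fun _ h => h.1) tendsto_id
  obtain ⟨y, -, hy⟩ := hε.exists
  calc (s : ℝ≥0∞) ≤ ((∑ i ∈ range n, ε i : ℝ≥0) : ℝ≥0∞) + δ := by simpa using hy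
    _ ≤ osSup f n x + δ := by gcongr; exact le_osSup f hx

theorem limsup_add_osSup_le_osSup_succ (n : ℕ) (x : K) :
    limsup (fun y => (‖f y - f x‖₊ : ℝ≥0∞) + osSup f n y) (𝓝 x) ≤ osSup f (n + 1) x := by
  refine le_of_forall_nnreal_lt fun s hs => le_of_forall_pos_le_add fun δ hδ _ => ?_
  have hfreq : ∃ᶠ y in 𝓝 x, (s : ℝ≥0∞) < osSup f n y + ‖f y - f x‖₊ := by
    simpa only [add_comm] using frequently_lt_of_lt_limsup (by isBoundedDefault) hs
  obtain ⟨ε, hε⟩ := exists_frequently_mem_osSets f hδ hfreq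
  set L := osSets f (fun i => ε i) n
  have hx : x ∈ L :=
    (isClosed_osSets f _ n).mem_of_frequently_of_tendsto (hε.mono fun _ h => h.1) tendsto_id
  set b := s - (∑ i ∈ range n, ε i + δ)
  have hb : (b : ℝ≥0∞) ≤ oscWithin f L x := by
    refine le_oscWithin_of_frequently f hx
      (frequently_nhdsWithin_iff.mpr (hε.mono fun y hy => ⟨?_, hy.1⟩))
    rw [ENNReal.coe_sub, tsub_le_iff_left]
    exact hy.2
  obtain ⟨ε', hε'n, hε'⟩ : ∃ ε' : ℕ → ℝ≥0, ε' n = b ∧ ∀ i < n, ε' i = ε i :=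
    ⟨Function.update ε n b, Function.update_self .., fun i hi => Function.update_of_ne hi.ne ..⟩
  have hL : osSets f (fun i => ε' i) n = L := osSets_congr f fun i hi => by rw [hε' i hi]
  have hx' : x ∈ osSets f (fun i => ε' i) (n + 1) := ⟨hL ▸ hx, by rw [hL]; simpa [hε'n] using hb⟩
  have hsum : ∑ i ∈ range (n + 1), ε' i = ∑ i ∈ range n, ε i + b := by
    rw [sum_range_succ, hε'n, sum_congr rfl fun i hi => hε' i (mem_range.mp hi)]
  calc (s : ℝ≥0∞) ≤ ((∑ i ∈ range (n + 1), ε' i : ℝ≥0) : ℝ≥0∞) + δ := by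
        rw [hsum, ← ENNReal.coe_add, ENNReal.coe_le_coe, add_right_comm]
        exact le_add_tsub
    _ ≤ osSup f (n + 1) x + δ := by gcongr; exact le_osSup f hx'

theorem oscN_le_osSup : ∀ (n : ℕ) (x : K), oscN f n x ≤ osSup f n x
  | 0, _ => by simp [oscN, oscNWithin]
  | n + 1, x => by
    rw [oscN_succ_apply]
    refine (limsup_le_limsup (.of_forall fun y => ?_)).trans (limsup_osSup_le f (n + 1) x)
    exact (limsup_le_limsup (.of_forall fun z => add_le_add_right (oscN_le_osSup n z) _)).trans
      (limsup_add_osSup_le_osSup_succ f n y)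

end UpperBound

end

theorem stmt12_general {K : Type u} [MetricSpace K] (f : K → ℂ) (n : ℕ) (x : K) :
    oscN f n x =
      ⨆ (k : ℕ) (_ : 1 ≤ k ∧ k ≤ n) (ε : ℕ → ℝ)
        (_ : (∀ i < k, 0 < ε i) ∧ x ∈ osSets f ε k),
        ENNReal.ofReal (∑ i ∈ Finset.range k, ε i) := by
  refine le_antisymm ((oscN_le_osSup f n x).trans (iSup₂_le fun ε hx => ?_))
    (iSup₂_le fun k hk => iSup₂_le fun ε hε => ?_)
  · obtain ⟨k, hkn, ε', hpos, hsum, hsub⟩ := exists_pos_sum_eq_osSets_subset f ε n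
    rw [← ENNReal.ofReal_coe_nnreal, NNReal.coe_sum, hsum]
    rcases Nat.eq_zero_or_pos k with rfl | hk
    · simp
    · exact le_iSup₂_of_le k ⟨hk, hkn⟩ (le_iSup₂_of_le ε' ⟨hpos, hsub hx⟩ le_rfl)
  · rw [ENNReal.ofReal_sum_of_nonneg fun i hi => (hε.1 i (mem_range.mp hi)).le]
    exact (sum_ofReal_le_oscN f hε.2).trans (oscN_mono f hk.2 x)

/-- `osc_n f(x)` equals the sup of `Σ_{i=1}^k ε_i` over `1 ≤ k ≤ n` and
positive `(ε_i)` with `x ∈ os_k(f,(ε_i))`. -/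
theorem stmt12 {K : Type u} [MetricSpace K] (f : K → ℂ)
    (hb : ∃ C : ℝ, ∀ k, ‖f k‖ ≤ C) (n : ℕ) (hn : 0 < n) (x : K) :
    oscN f n x =
      ⨆ (k : ℕ) (_ : 1 ≤ k ∧ k ≤ n) (ε : ℕ → ℝ)
        (_ : (∀ i < k, 0 < ε i) ∧ x ∈ osSets f ε k),
        ENNReal.ofReal (∑ i ∈ Finset.range k, ε i) :=
  stmt12_general f n x
end

section
/- Let K be a metric space and f : K → ℝ a real-valued function in SD(K). Then ‖f‖_D = ‖f‖_{B_{1/4}}. -/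
open Filter Set Topology ENNReal

/-! The constant sequence gives `‖f‖_{B_{1/4}} ≤ ‖f‖_D`. Conversely, let `g n → f` uniformly with
`‖g n‖_D ≤ λ`, and let `φ` be simple with `‖f - φ‖_D` small. As `f` is real, `ψ = Re φ` is a simple
real function with `‖f - ψ‖_D ≤ ‖f - φ‖_D`. The finitely many values of `ψ` are separated, so for
every `L > 1` there are `δ > 0` and an `L`-Lipschitz `h : ℝ → ℝ` equal to `v` on `[v - δ, v + δ]`
for each value `v`. Telescoping a Lipschitz `Φ` with `Φ 0 = 0` along the partial sums of a
representation gives `‖Φ ∘ u‖_D ≤ Lip(Φ) ‖u‖_D`; applied to `h ∘ Re` and `u = g n - (f - ψ)` with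
`n` large, this yields `‖ψ‖_D ≤ L (λ + ‖f - φ‖_D)`, hence `‖f‖_D ≤ λ + 2 ‖f - φ‖_D`. -/

open scoped NNReal

section DNorm

variable {K : Type u}

def interleave (φ χ : ℕ → K → ℂ) : ℕ → K → ℂ :=
  fun j => Sum.elim φ χ (Equiv.natSumNatEquivNat.symm j)

def lipTelescope (Φ : ℂ → ℂ) (φ : ℕ → K → ℂ) : ℕ → K → ℂ :=
  fun j k => Φ (∑ i ∈ Finset.range (j + 1), φ i k) - Φ (∑ i ∈ Finset.range j, φ i k)

theorem nnnorm_lipTelescope_le {Φ : ℂ → ℂ} {L : ℝ≥0} (hΦ : LipschitzWith L Φ)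
    (φ : ℕ → K → ℂ) (j : ℕ) (k : K) :
    (‖lipTelescope Φ φ j k‖₊ : ℝ≥0∞) ≤ L * ‖φ j k‖₊ := by
  have h := hΦ (∑ i ∈ Finset.range (j + 1), φ i k) (∑ i ∈ Finset.range j, φ i k)
  rwa [edist_eq_enorm_sub, edist_eq_enorm_sub, Finset.sum_range_succ_sub_sum] at h

variable [MetricSpace K]

theorem dNorm_le_dBound {f : K → ℂ} {φ : ℕ → K → ℂ} (h : IsDRep f φ) : DNorm f ≤ DBound φ :=
  iInf₂_le φ h

theorem IsDRep.add {a b : K → ℂ} {φ χ : ℕ → K → ℂ} (hφ : IsDRep a φ) (hχ : IsDRep b χ) :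
    IsDRep (a + b) (interleave φ χ) := by
  refine ⟨fun j => ?_, fun k => ?_⟩
  · unfold interleave
    rcases Equiv.natSumNatEquivNat.symm j with m | m
    · exact hφ.1 m
    · exact hχ.1 m
  · exact (Equiv.natSumNatEquivNat.symm.hasSum_iff (f := fun s => Sum.elim φ χ s k)).2
      ((hφ.2 k).sum (hχ.2 k))

theorem dBound_interleave_le (φ χ : ℕ → K → ℂ) :
    DBound (interleave φ χ) ≤ DBound φ + DBound χ := by
  refine iSup_le fun k => ?_
  calc ∑' j, (‖interleave φ χ j k‖₊ : ℝ≥0∞)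
      = ∑' s, (‖Sum.elim φ χ s k‖₊ : ℝ≥0∞) :=
        Equiv.natSumNatEquivNat.symm.tsum_eq (fun s => (‖Sum.elim φ χ s k‖₊ : ℝ≥0∞))
    _ = ∑' m, (‖φ m k‖₊ : ℝ≥0∞) + ∑' m, (‖χ m k‖₊ : ℝ≥0∞) :=
        ENNReal.summable.tsum_sum ENNReal.summable
    _ ≤ DBound φ + DBound χ :=
        add_le_add (le_iSup (fun k => ∑' j, (‖φ j k‖₊ : ℝ≥0∞)) k)
          (le_iSup (fun k => ∑' j, (‖χ j k‖₊ : ℝ≥0∞)) k)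

theorem dNorm_add_le (a b : K → ℂ) : DNorm (a + b) ≤ DNorm a + DNorm b :=
  ENNReal.le_iInf₂_add_iInf₂ fun φ hφ χ hχ =>
    (dNorm_le_dBound (hφ.add hχ)).trans (dBound_interleave_le φ χ)

variable {Φ : ℂ → ℂ} {L : ℝ≥0}

theorem dBound_lipTelescope_le (hΦ : LipschitzWith L Φ) (φ : ℕ → K → ℂ) :
    DBound (lipTelescope Φ φ) ≤ L * DBound φ := by
  refine iSup_le fun k => ?_
  calc ∑' j, (‖lipTelescope Φ φ j k‖₊ : ℝ≥0∞)
      ≤ ∑' j, (L : ℝ≥0∞) * ‖φ j k‖₊ :=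
        ENNReal.tsum_le_tsum fun j => nnnorm_lipTelescope_le hΦ φ j k
    _ = L * ∑' j, (‖φ j k‖₊ : ℝ≥0∞) := ENNReal.tsum_mul_left
    _ ≤ L * DBound φ := by gcongr; exact le_iSup (fun k => ∑' j, (‖φ j k‖₊ : ℝ≥0∞)) k

theorem IsDRep.lipschitz_comp {g : K → ℂ} {φ : ℕ → K → ℂ} (hφ : IsDRep g φ)
    (hbound : DBound φ ≠ ⊤) (hΦ : LipschitzWith L Φ) (hΦ0 : Φ 0 = 0) :
    IsDRep (fun k => Φ (g k)) (lipTelescope Φ φ) := by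
  have hpartial : ∀ j, Continuous fun k => ∑ i ∈ Finset.range j, φ i k := fun j =>
    continuous_finsetSum _ fun i _ => hφ.1 i
  refine ⟨fun j => (hΦ.continuous.comp (hpartial (j + 1))).sub
    (hΦ.continuous.comp (hpartial j)), fun k => ?_⟩
  have hsummable : Summable fun j => lipTelescope Φ φ j k := by
    refine Summable.of_nnnorm (ENNReal.tsum_coe_ne_top_iff_summable.1 ?_)
    refine ne_top_of_le_ne_top (ENNReal.mul_ne_top (ENNReal.coe_ne_top (r := L)) hbound) ?_
    exact (le_iSup (fun k => ∑' j, (‖lipTelescope Φ φ j k‖₊ : ℝ≥0∞)) k).trans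
      (dBound_lipTelescope_le hΦ φ)
  refine hsummable.hasSum_iff_tendsto_nat.2 ?_
  have htelescope : ∀ N, ∑ j ∈ Finset.range N, lipTelescope Φ φ j k =
      Φ (∑ i ∈ Finset.range N, φ i k) := fun N => by
    simp only [lipTelescope, Finset.sum_range_sub (fun j => Φ (∑ i ∈ Finset.range j, φ i k)),
      Finset.sum_range_zero, hΦ0, sub_zero]
  simp only [htelescope]
  exact (hΦ.continuous.tendsto (g k)).comp (hφ.2 k).tendsto_sum_nat

theorem dNorm_comp_le (hL : L ≠ 0) (hΦ : LipschitzWith L Φ) (hΦ0 : Φ 0 = 0) (g : K → ℂ) :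
    DNorm (fun k => Φ (g k)) ≤ L * DNorm g := by
  simp only [DNorm, ENNReal.mul_iInf_of_ne (ENNReal.coe_ne_zero.2 hL) ENNReal.coe_ne_top]
  refine le_iInf₂ fun φ hφ => ?_
  rcases eq_or_ne (DBound φ) ⊤ with htop | hbound
  · simp [htop, ENNReal.mul_top, hL]
  · exact (iInf₂_le _ (hφ.lipschitz_comp hbound hΦ hΦ0)).trans (dBound_lipTelescope_le hΦ φ)

theorem dNorm_ofReal_re_le (g : K → ℂ) : DNorm (fun k => ((g k).re : ℂ)) ≤ DNorm g := by
  have hΦ : LipschitzWith 1 fun z : ℂ => ((z.re : ℝ) : ℂ) :=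
    (Complex.isometry_ofReal.lipschitz.comp Complex.reCLM.lipschitz).weaken (by simp)
  simpa using dNorm_comp_le one_ne_zero hΦ (by simp) g

theorem dNorm_sub_le (a b : K → ℂ) : DNorm (a - b) ≤ DNorm a + DNorm b := by
  have hneg : DNorm (-b) ≤ DNorm b :=
    (dNorm_comp_le one_ne_zero LipschitzWith.id.neg neg_zero b).trans_eq (one_mul _)
  rw [sub_eq_add_neg]
  exact (dNorm_add_le a (-b)).trans (add_le_add le_rfl hneg)

end DNorm

theorem Set.Finite.exists_pos_forall_le_dist {α : Type*} [MetricSpace α] {s : Set α}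
    (hs : s.Finite) : ∃ γ > 0, ∀ x ∈ s, ∀ y ∈ s, x ≠ y → γ ≤ dist x y := by
  obtain ⟨C, hC, hsep⟩ := hs.relatively_discrete
  refine ⟨(min C 1).toReal, ENNReal.toReal_pos (lt_min hC one_pos).ne'
    (min_le_right C 1 |>.trans_lt ENNReal.one_lt_top).ne, fun x hx y hy hxy => ?_⟩
  rw [← ENNReal.ofReal_le_ofReal_iff dist_nonneg, ← edist_dist,
    ENNReal.ofReal_toReal (min_le_right C 1 |>.trans_lt ENNReal.one_lt_top).ne]
  exact (min_le_left C 1).trans (hsep x hx y hy hxy)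

/-- Two points `δ`-close to distinct `v ≠ w` of `V` are at distance at least
`|v - w| - 2δ ≥ |v - w| / L` once `2δL ≤ γ(L - 1)`. -/
theorem exists_lipschitzWith_retraction {V : Set ℝ} {γ : ℝ} (hγ : 0 < γ)
    (hsep : ∀ v ∈ V, ∀ w ∈ V, v ≠ w → γ ≤ |v - w|) {L : ℝ≥0} (hL : 1 < L) :
    ∃ δ > 0, ∃ h : ℝ → ℝ, LipschitzWith L h ∧ ∀ v ∈ V, ∀ t, |t - v| ≤ δ → h t = v := by
  set δ : ℝ := γ * (L - 1) / (2 * L) with hδ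
  have hδ0 : 0 < δ := div_pos (mul_pos hγ (sub_pos.2 hL)) (by positivity)
  have hδL : 2 * δ * L = γ * (L - 1) := by rw [hδ]; field_simp
  have h2δ : 2 * δ < γ := by nlinarith
  have hclose : ∀ v ∈ V, ∀ w ∈ V, ∀ t u, |t - v| ≤ δ → |u - w| ≤ δ →
      |v - w| ≤ |t - u| + 2 * δ := fun v _ w _ t u htv huw => by
    calc |v - w| = |(v - t) + (t - u) + (u - w)| := by ring_nf
      _ ≤ |v - t| + |t - u| + |u - w| := abs_add_three _ _ _
      _ ≤ |t - u| + 2 * δ := by rw [abs_sub_comm v t]; linarith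
  have hnearest : ∀ t, ∃ p, ∀ v ∈ V, |t - v| ≤ δ → p = v := fun t => by
    by_cases hS : ∃ v ∈ V, |t - v| ≤ δ
    · obtain ⟨v, hv, htv⟩ := hS
      refine ⟨v, fun w hw htw => by_contra fun hvw => ?_⟩
      have := hclose v hv w hw t t htv htw
      rw [sub_self, abs_zero] at this
      linarith [hsep v hv w hw hvw]
    · exact ⟨0, fun v hv htv => absurd ⟨v, hv, htv⟩ hS⟩
  choose p hp using hnearest
  have hlip : LipschitzOnWith L p {t | ∃ v ∈ V, |t - v| ≤ δ} := by
    refine LipschitzOnWith.of_dist_le_mul fun t ⟨v, hv, htv⟩ u ⟨w, hw, huw⟩ => ?_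
    rw [hp t v hv htv, hp u w hw huw, Real.dist_eq, Real.dist_eq]
    rcases eq_or_ne v w with rfl | hvw
    · simp only [sub_self, abs_zero]; positivity
    · have hvw' := hsep v hv w hw hvw
      have := hclose v hv w hw t u htv huw
      nlinarith
  obtain ⟨h, hh, hph⟩ := hlip.extend_real
  exact ⟨δ, hδ0, h, hh, fun v hv t htv => (hph ⟨v, hv, htv⟩).symm.trans (hp t v hv htv)⟩

section B14

variable {K : Type u} [MetricSpace K]

theorem dNorm_ofReal_le_of_forall_approx {ψ : K → ℝ} (hψ : (range ψ).Finite) {c : ℝ≥0∞}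
    (happrox : ∀ δ > 0, ∃ G : K → ℂ, (∀ k, |(G k).re - ψ k| ≤ δ) ∧ DNorm G ≤ c) :
    DNorm (fun k => (ψ k : ℂ)) ≤ c := by
  obtain ⟨γ, hγ, hsep⟩ := (hψ.insert 0).exists_pos_forall_le_dist
  have hscaled : ∀ L : ℝ≥0, 1 < L → DNorm (fun k => (ψ k : ℂ)) ≤ L * c := by
    intro L hL
    obtain ⟨δ, hδ, h, hh, hretract⟩ := exists_lipschitzWith_retraction hγ hsep hL
    obtain ⟨G, hGψ, hGc⟩ := happrox δ hδ
    have hΦ : LipschitzWith L fun z : ℂ => ((h z.re : ℝ) : ℂ) :=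
      ((Complex.isometry_ofReal.lipschitz.comp hh).comp Complex.reCLM.lipschitz).weaken (by simp)
    have hΦ0 : ((h (0 : ℂ).re : ℝ) : ℂ) = 0 := by
      rw [Complex.zero_re, hretract 0 (mem_insert 0 _) 0 (by simpa using hδ.le),
        Complex.ofReal_zero]
    have hψG : (fun k => (ψ k : ℂ)) = fun k => ((h (G k).re : ℝ) : ℂ) := funext fun k => by
      rw [hretract (ψ k) (mem_insert_of_mem _ (mem_range_self k)) _ (hGψ k)]
    rw [hψG]
    exact (dNorm_comp_le (zero_lt_one.trans hL).ne' hΦ hΦ0 G).trans (by gcongr)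
  have hlim : Tendsto (fun L : ℝ≥0 => (L : ℝ≥0∞) * c) (𝓝[>] 1) (𝓝 c) := by
    simpa using ENNReal.Tendsto.mul_const
      ((ENNReal.continuous_coe.tendsto 1).mono_left nhdsWithin_le_nhds) (Or.inl one_ne_zero)
  exact ge_of_tendsto hlim (eventually_nhdsWithin_of_forall hscaled)

theorem dNorm_ofReal_le_of_tendstoUniformly {f : K → ℝ} {g : ℕ → K → ℂ} {c : ℝ≥0∞}
    (hg : TendstoUniformly g (fun k => (f k : ℂ)) atTop) (hgc : ∀ n, DNorm (g n) ≤ c)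
    {φ : K → ℂ} (hφ : (range φ).Finite) :
    DNorm (fun k => (f k : ℂ)) ≤ c + 2 * DNorm ((fun k => (f k : ℂ)) - φ) := by
  set d := DNorm ((fun k => (f k : ℂ)) - φ)
  set ψ : K → ℝ := fun k => (φ k).re
  set r : K → ℂ := fun k => ((f k - ψ k : ℝ) : ℂ)
  have hr : DNorm r ≤ d := by
    convert dNorm_ofReal_re_le ((fun k => (f k : ℂ)) - φ) using 3
    simp [r, ψ]
  have hψ : DNorm (fun k => (ψ k : ℂ)) ≤ c + d := by
    refine dNorm_ofReal_le_of_forall_approx (range_comp Complex.re φ ▸ hφ.image _)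
      fun δ hδ => ?_
    obtain ⟨n, hn⟩ := (Metric.tendstoUniformly_iff.1 hg δ hδ).exists
    refine ⟨g n - r, fun k => ?_, (dNorm_sub_le _ _).trans (add_le_add (hgc n) hr)⟩
    have hre : ((g n - r) k).re - ψ k = -((f k : ℂ) - g n k).re := by simp [r]; ring
    rw [hre, abs_neg]
    exact (Complex.abs_re_le_norm _).trans ((dist_eq_norm _ _).symm.trans_lt (hn k)).le
  calc DNorm (fun k => (f k : ℂ)) = DNorm ((fun k => (ψ k : ℂ)) + r) := by
        congr 1; funext k; simp [r]
    _ ≤ DNorm (fun k => (ψ k : ℂ)) + DNorm r := dNorm_add_le _ _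
    _ ≤ c + d + d := add_le_add hψ hr
    _ = c + 2 * d := by rw [two_mul, add_assoc]

theorem dNorm_ofReal_le_b14Norm {f : K → ℝ}
    (happrox : ∀ ε > 0, ∃ φ : K → ℂ, (range φ).Finite ∧ DNorm ((fun k => (f k : ℂ)) - φ) < ε) :
    DNorm (fun k => (f k : ℂ)) ≤ B14Norm (fun k => (f k : ℂ)) := by
  refine le_iInf₂ fun c ⟨g, hg, hgu⟩ => ENNReal.le_of_forall_pos_le_add fun ε hε _ => ?_
  obtain ⟨φ, hφ, hfφ⟩ := happrox (ε / 2) (by simpa using hε.ne')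
  calc DNorm (fun k => (f k : ℂ)) ≤ c + 2 * DNorm ((fun k => (f k : ℂ)) - φ) :=
        dNorm_ofReal_le_of_tendstoUniformly hgu (fun n => (hg n).2) hφ
    _ ≤ c + 2 * (ε / 2) := by gcongr
    _ = c + ε := by rw [ENNReal.mul_div_cancel two_ne_zero ENNReal.ofNat_ne_top]

theorem b14Norm_le_dNorm {f : K → ℂ} (hf : MemD f) : B14Norm f ≤ DNorm f :=
  iInf₂_le _ ⟨fun _ => f, fun _ => ⟨hf, le_rfl⟩,
    Metric.tendstoUniformly_iff.2 fun _ hε => Eventually.of_forall fun _ k => by simpa using hε⟩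

end B14

/-- for real-valued `f ∈ SD(K)`, `‖f‖_D = ‖f‖_{B_{1/4}}`. -/
theorem stmt16 {K : Type u} [MetricSpace K] (f : K → ℝ)
    (hf : MemSD (fun k => (f k : ℂ))) :
    DNorm (fun k => (f k : ℂ)) = B14Norm (fun k => (f k : ℂ)) := by
  refine le_antisymm (dNorm_ofReal_le_b14Norm fun ε hε => ?_) (b14Norm_le_dNorm hf.1)
  obtain ⟨φ, hφ, -, hfφ⟩ := hf.2 ε hε
  exact ⟨φ, hφ, hfφ⟩
end
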